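/- arXiv:2403.08724 — 3 statements merged into one kernel-verified Lean document; each statement's English description precedes it below -/
import Mathlib

section
/- Let φ_1, φ_2 ∈ ℂ and let δ_1σ_1, δ_2σ_2 be products of destabilizer and stabilizer elements (Hermitian operators squaring to identity, with commutation relations determined by the symplectic inner products). If U = φ_1 δ_1σ_1 + φ_2 δ_2σ_2 is unitary, then |φ_1|² + |φ_2|² = 1 and φ_2* φ_1 (-1)^{(d̂_1+d̂_2)·(ŝ_1+ŝ_2)} = -φ_1* φ_2, where d̂_i, ŝ_i are the boolean vectors of δ_i, σ_i and the exponent is the mod-2 inner product. -/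
open Matrix BigOperators Finset

/-- Bitwise XOR of bit strings. -/
def bxor {n : ℕ} (a b : Fin n → Bool) : Fin n → Bool := fun k => xor (a k) (b k)

/-- Number of positions where both bit strings are 1 (mod-2 inner product is its parity). -/
def bip {n : ℕ} (a b : Fin n → Bool) : ℕ :=
  (Finset.univ.filter (fun k => a k = true ∧ b k = true)).card

/-- The Pauli string `δ_a σ_b = X_a Z_b`: `X_a Z_b |w⟩ = (-1)^{w·b} |w ⊕ a⟩`. -/
noncomputable def XZ (n : ℕ) (a b : Fin n → Bool) :
    Matrix (Fin n → Bool) (Fin n → Bool) ℂ :=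
  Matrix.of fun v w => if v = bxor w a then ((-1 : ℂ) ^ bip w b) else 0

set_option maxRecDepth 10000

lemma xor_eq_xor_iff : ∀ x y a b : Bool, (xor x a = xor y b) ↔ (x = xor y (xor a b)) := by decide

lemma bxor_eq_iff {n} (v w a1 a2 : Fin n → Bool) :
    bxor v a1 = bxor w a2 ↔ v = bxor w (bxor a1 a2) := by
  simp only [funext_iff, bxor]
  exact forall_congr' fun k => xor_eq_xor_iff _ _ _ _

lemma bxor_self {n} (a : Fin n → Bool) : bxor a a = fun _ => false :=
  funext fun k => Bool.xor_self _

lemma bxor_false {n} (w : Fin n → Bool) : bxor w (fun _ => false) = w :=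
  funext fun k => Bool.xor_false _

lemma bxor_false_left {n} (w : Fin n → Bool) : bxor (fun _ => false) w = w :=
  funext fun k => Bool.false_xor _

lemma bxor_comm {n} (a b : Fin n → Bool) : bxor a b = bxor b a :=
  funext fun k => Bool.xor_comm _ _

lemma neg_one_bip_eq_prod {n} (v b : Fin n → Bool) :
    ((-1:ℂ)) ^ bip v b = ∏ k, if v k = true ∧ b k = true then (-1:ℂ) else 1 := by
  rw [bip, ← Finset.prod_const, Finset.prod_filter]

lemma neg_one_bip_mul {n} (v b1 b2 : Fin n → Bool) :
    ((-1:ℂ)) ^ bip v b1 * (-1) ^ bip v b2 = (-1) ^ bip v (bxor b1 b2) := by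
  rw [neg_one_bip_eq_prod, neg_one_bip_eq_prod, neg_one_bip_eq_prod, ← Finset.prod_mul_distrib]
  refine Finset.prod_congr rfl fun k _ => ?_
  cases hv : v k <;> cases h1 : b1 k <;> cases h2 : b2 k <;> simp [bxor, hv, h1, h2]

lemma neg_one_bip_sq {n} (v b : Fin n → Bool) :
    ((-1:ℂ)) ^ bip v b * (-1) ^ bip v b = 1 := by
  rw [← pow_add, ← two_mul, pow_mul]; norm_num

lemma bip_zero_left {n} (b : Fin n → Bool) : bip (fun _ => false) b = 0 := by
  simp [bip]

lemma bip_indicator {n} (k0 : Fin n) (t : Fin n → Bool) (ht : t k0 = true) :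
    bip (fun k => decide (k = k0)) t = 1 := by
  rw [bip]
  have : (Finset.univ.filter (fun k => (decide (k = k0)) = true ∧ t k = true)) = {k0} := by
    ext k
    simp only [Finset.mem_filter, Finset.mem_univ, true_and, Finset.mem_singleton,
      decide_eq_true_eq]
    exact ⟨fun h => h.1, fun h => ⟨h, h ▸ ht⟩⟩
  rw [this, Finset.card_singleton]

lemma XZ_mul {n} (a1 b1 a2 b2 : Fin n → Bool) :
    (XZ n a1 b1)ᴴ * XZ n a2 b2 = Matrix.of fun v w =>
      if v = bxor w (bxor a1 a2) then ((-1:ℂ) ^ bip v b1 * (-1) ^ bip w b2) else 0 := by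
  ext v w
  rw [Matrix.mul_apply]
  simp only [Matrix.conjTranspose_apply, XZ, Matrix.of_apply]
  simp only [apply_ite (star : ℂ → ℂ), star_zero, star_pow, star_neg, star_one, ite_mul, zero_mul,
    mul_ite, mul_zero]
  rw [Finset.sum_ite_eq' Finset.univ (bxor w a2)]
  have : (bxor w a2 = bxor v a1) ↔ (v = bxor w (bxor a1 a2)) := by
    rw [eq_comm, bxor_eq_iff]
  simp [this]

lemma abs_part (φ1 φ2 : ℂ) (h : (starRingEnd ℂ) φ1 * φ1 + (starRingEnd ℂ) φ2 * φ2 = 1) :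
    ‖φ1‖ ^ 2 + ‖φ2‖ ^ 2 = 1 := by
  rw [mul_comm ((starRingEnd ℂ) φ1), mul_comm ((starRingEnd ℂ) φ2), Complex.mul_conj,
    Complex.mul_conj] at h
  rw [Complex.sq_norm, Complex.sq_norm]
  exact_mod_cast h

/-- if `U = φ₁ δ₁σ₁ + φ₂ δ₂σ₂` is unitary (with `δ₁σ₁ ≠ δ₂σ₂`), then
`|φ₁|² + |φ₂|² = 1` and `φ₂* φ₁ (-1)^{(d̂₁+d̂₂)·(ŝ₁+ŝ₂)} = -φ₁* φ₂`. -/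
theorem two_term_pauli_unitarity_conditions
    (n : ℕ) (d1 s1 d2 s2 : Fin n → Bool) (φ1 φ2 : ℂ)
    (hne : (d1, s1) ≠ (d2, s2))
    (hU : (φ1 • XZ n d1 s1 + φ2 • XZ n d2 s2)ᴴ *
          (φ1 • XZ n d1 s1 + φ2 • XZ n d2 s2) = 1) :
    ‖φ1‖ ^ 2 + ‖φ2‖ ^ 2 = 1 ∧
    (starRingEnd ℂ) φ2 * φ1 * (-1 : ℂ) ^ bip (bxor d1 d2) (bxor s1 s2)
      = -((starRingEnd ℂ) φ1 * φ2) := by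
  classical
  have key : ∀ v w : Fin n → Bool,
      (starRingEnd ℂ) φ1 * φ1 * (((XZ n d1 s1)ᴴ * XZ n d1 s1) v w)
      + (starRingEnd ℂ) φ1 * φ2 * (((XZ n d1 s1)ᴴ * XZ n d2 s2) v w)
      + (starRingEnd ℂ) φ2 * φ1 * (((XZ n d2 s2)ᴴ * XZ n d1 s1) v w)
      + (starRingEnd ℂ) φ2 * φ2 * (((XZ n d2 s2)ᴴ * XZ n d2 s2) v w)
      = if v = w then 1 else 0 := by
    intro v w
    have h := congrFun (congrFun hU v) w
    rw [Matrix.mul_apply] at h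
    simp only [Matrix.conjTranspose_apply, Matrix.add_apply, Matrix.smul_apply, smul_eq_mul,
      Matrix.one_apply] at h
    rw [Matrix.mul_apply, Matrix.mul_apply, Matrix.mul_apply, Matrix.mul_apply]
    simp only [Matrix.conjTranspose_apply]
    rw [Finset.mul_sum, Finset.mul_sum, Finset.mul_sum, Finset.mul_sum,
        ← Finset.sum_add_distrib, ← Finset.sum_add_distrib, ← Finset.sum_add_distrib]
    rw [← h]
    refine Finset.sum_congr rfl fun u _ => ?_
    simp only [star_add, star_mul', starRingEnd_apply]
    ring
  simp only [XZ_mul, Matrix.of_apply, bxor_self, bxor_false, bxor_comm d2 d1] at key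
  by_cases hd : d1 = d2
  · -- same X part, different Z part
    subst hd
    simp only [bxor_self, bxor_false] at key
    have hs : s1 ≠ s2 := fun h => hne (by rw [h])
    obtain ⟨k0, hk0⟩ : ∃ k, s1 k ≠ s2 k := by
      by_contra hcon
      push_neg at hcon
      exact hs (funext hcon)
    have ht0 : bxor s1 s2 k0 = true := by
      simp only [bxor]
      cases h1 : s1 k0 <;> cases h2 : s2 k0 <;> simp_all
    have diag : ∀ v : Fin n → Bool,
        (starRingEnd ℂ) φ1 * φ1 + (starRingEnd ℂ) φ2 * φ2
        + ((starRingEnd ℂ) φ1 * φ2 + (starRingEnd ℂ) φ2 * φ1) * (-1:ℂ) ^ bip v (bxor s1 s2)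
        = 1 := by
      intro v
      have h := key v v
      simp only [eq_self_iff_true, if_true] at h
      rw [neg_one_bip_sq, neg_one_bip_sq] at h
      have m := neg_one_bip_mul v s1 s2
      linear_combination h - ((starRingEnd ℂ) φ1 * φ2 + (starRingEnd ℂ) φ2 * φ1) * m
    have h1 := diag (fun _ => false)
    have h2 := diag (fun k => decide (k = k0))
    rw [bip_zero_left, pow_zero, mul_one] at h1
    rw [bip_indicator k0 _ ht0, pow_one] at h2
    constructor
    · exact abs_part _ _ (by linear_combination (h1 + h2) / 2)
    · rw [bxor_self, bip_zero_left, pow_zero, mul_one]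
      linear_combination (h1 - h2) / 2
  · -- different X part
    obtain ⟨k0, hk0⟩ : ∃ k, d1 k ≠ d2 k := by
      by_contra hcon
      push_neg at hcon
      exact hd (funext hcon)
    have hne' : ∀ w : Fin n → Bool, ¬ (w = bxor w (bxor d1 d2)) := by
      intro w hw
      apply hk0
      have hcf := congrFun hw k0
      simp only [bxor] at hcf
      revert hcf
      cases w k0 <;> cases d1 k0 <;> cases d2 k0 <;> decide
    have hcz : ¬ (bxor d1 d2 = fun _ => false) := by
      intro hw
      apply hk0
      have hcf := congrFun hw k0
      simp only [bxor] at hcf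
      revert hcf
      cases d1 k0 <;> cases d2 k0 <;> decide
    have h1 := key (fun _ => false) (fun _ => false)
    rw [if_pos rfl, if_pos rfl, if_pos rfl, if_neg (hne' (fun _ => false)),
      if_neg (hne' (fun _ => false))] at h1
    simp only [bip_zero_left, pow_zero, mul_one, mul_zero, add_zero, zero_add] at h1
    have h2 := key (bxor d1 d2) (fun _ => false)
    rw [bxor_false_left] at h2
    rw [if_pos rfl, if_pos rfl, if_neg hcz, if_neg hcz, if_neg hcz] at h2
    simp only [bip_zero_left, pow_zero, mul_one, mul_zero, add_zero, zero_add] at h2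
    constructor
    · exact abs_part _ _ (by linear_combination h1)
    · have hm := neg_one_bip_mul (bxor d1 d2) s1 s2
      have hsq := neg_one_bip_sq (bxor d1 d2) s1
      linear_combination ((-1:ℂ) ^ bip (bxor d1 d2) s1) * h2
        - ((starRingEnd ℂ) φ2 * φ1) * hm - ((starRingEnd ℂ) φ1 * φ2) * hsq
end

section
/- Under the unitarity conditions |φ_1|²+|φ_2|²=1 and φ_2*φ_1(-1)^{w} = -φ_1*φ_2 where w = (d̂_1+d̂_2)·(ŝ_1+ŝ_2) mod 2, one can write φ_1 = e^{iφ}cos θ and φ_2 = e^{iφ}e^{iω}sin θ with e^{iω} = ±(-i)^{w+1}. In particular, the relative phase e^{iω} satisfies e^{2iω} = (-1)^{w+1}. -/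
open Complex

/-- under the unitarity conditions `|φ₁|²+|φ₂|²=1` and
`φ₂*φ₁(-1)^w = -φ₁*φ₂` (both coefficients nonzero), one can write
`φ₁ = e^{iφ} cos θ`, `φ₂ = e^{iφ} e^{iω} sin θ` with `e^{2iω} = (-1)^{w+1}`
and `e^{iω} = ±(-i)^{w+1}`. -/
theorem two_term_unitary_phase_factorization
    (φ1 φ2 : ℂ) (w : ℕ)
    (h1 : ‖φ1‖ ^ 2 + ‖φ2‖ ^ 2 = 1)
    (h2 : (starRingEnd ℂ) φ2 * φ1 * (-1 : ℂ) ^ w = -((starRingEnd ℂ) φ1 * φ2))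
    (hφ1 : φ1 ≠ 0) (hφ2 : φ2 ≠ 0) :
    ∃ φ θ ω : ℝ,
      φ1 = Complex.exp ((φ : ℂ) * Complex.I) * (Real.cos θ : ℂ) ∧
      φ2 = Complex.exp ((φ : ℂ) * Complex.I) * Complex.exp ((ω : ℂ) * Complex.I) *
            (Real.sin θ : ℂ) ∧
      Complex.exp (2 * (ω : ℂ) * Complex.I) = (-1 : ℂ) ^ (w + 1) ∧
      (Complex.exp ((ω : ℂ) * Complex.I) = (-Complex.I) ^ (w + 1) ∨
       Complex.exp ((ω : ℂ) * Complex.I) = -((-Complex.I) ^ (w + 1))) := by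
  set r1 : ℝ := ‖φ1‖ with hr1
  set r2 : ℝ := ‖φ2‖ with hr2
  set α : ℝ := Complex.arg φ1 with hα
  set β : ℝ := Complex.arg φ2 with hβ
  have hr1pos : 0 < r1 := by simpa [hr1] using (norm_pos_iff.mpr hφ1)
  have hr2pos : 0 < r2 := by simpa [hr2] using (norm_pos_iff.mpr hφ2)
  have hφ1eq : φ1 = (r1 : ℂ) * Complex.exp ((α : ℂ) * Complex.I) := by
    rw [hr1, hα]; exact (Complex.norm_mul_exp_arg_mul_I φ1).symm
  have hφ2eq : φ2 = (r2 : ℂ) * Complex.exp ((β : ℂ) * Complex.I) := by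
    rw [hr2, hβ]; exact (Complex.norm_mul_exp_arg_mul_I φ2).symm
  have hr1le : r1 ≤ 1 := by
    nlinarith [norm_nonneg φ2, norm_nonneg φ1]
  -- key phase identity
  have hc1 : (starRingEnd ℂ) φ1 = (r1 : ℂ) * Complex.exp (-((α : ℂ) * Complex.I)) := by
    rw [hφ1eq, map_mul, ← Complex.exp_conj]
    simp [map_mul, Complex.conj_I, Complex.conj_ofReal]
  have hc2 : (starRingEnd ℂ) φ2 = (r2 : ℂ) * Complex.exp (-((β : ℂ) * Complex.I)) := by
    rw [hφ2eq, map_mul, ← Complex.exp_conj]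
    simp [map_mul, Complex.conj_I, Complex.conj_ofReal]
  rw [hc1, hc2, hφ1eq, hφ2eq] at h2
  have hr12 : ((r1 : ℂ) * r2) ≠ 0 := by
    simp [hr1pos.ne', hr2pos.ne', ne_eq, Complex.ofReal_eq_zero]
  have h3 : Complex.exp (-((β : ℂ) * Complex.I)) * Complex.exp ((α : ℂ) * Complex.I) *
      (-1 : ℂ) ^ w = -(Complex.exp (-((α : ℂ) * Complex.I)) * Complex.exp ((β : ℂ) * Complex.I)) := by
    apply mul_left_cancel₀ hr12
    linear_combination h2
  have hAB : (Complex.exp (-((α : ℂ) * Complex.I)) * Complex.exp ((β : ℂ) * Complex.I)) *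
      (Complex.exp (-((β : ℂ) * Complex.I)) * Complex.exp ((α : ℂ) * Complex.I)) = 1 := by
    rw [← Complex.exp_add, ← Complex.exp_add, ← Complex.exp_add]
    have : (-((α : ℂ) * Complex.I) + (β : ℂ) * Complex.I) + (-((β : ℂ) * Complex.I) + (α : ℂ) * Complex.I) = 0 := by ring
    rw [this, Complex.exp_zero]
  have hkey : Complex.exp (2 * (((β - α : ℝ)) : ℂ) * Complex.I) = (-1 : ℂ) ^ (w + 1) := by
    have e1 : Complex.exp (2 * (((β - α : ℝ)) : ℂ) * Complex.I) =
        (Complex.exp (-((α : ℂ) * Complex.I)) * Complex.exp ((β : ℂ) * Complex.I)) *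
        (Complex.exp (-((α : ℂ) * Complex.I)) * Complex.exp ((β : ℂ) * Complex.I)) := by
      rw [← Complex.exp_add, ← Complex.exp_add]
      congr 1; push_cast; ring
    rw [e1]
    linear_combination (Complex.exp (-((α : ℂ) * Complex.I)) * Complex.exp ((β : ℂ) * Complex.I)) * h3 - (-1 : ℂ) ^ w * hAB
  refine ⟨α, Real.arccos r1, β - α, ?_, ?_, hkey, ?_⟩
  · rw [Real.cos_arccos (by linarith) hr1le, hφ1eq]; ring
  · have hsin : Real.sin (Real.arccos r1) = r2 := by
      rw [Real.sin_arccos]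
      have h : 1 - r1 ^ 2 = r2 ^ 2 := by linarith
      rw [h, Real.sqrt_sq hr2pos.le]
    rw [hsin, hφ2eq, ← Complex.exp_add]
    push_cast
    ring_nf
  · set x := Complex.exp ((((β - α : ℝ)) : ℂ) * Complex.I) with hx
    have hx2 : x ^ 2 = (-1 : ℂ) ^ (w + 1) := by
      rw [hx, sq, ← Complex.exp_add, ← hkey]
      ring_nf
    have hy2 : ((-Complex.I) ^ (w + 1)) ^ 2 = (-1 : ℂ) ^ (w + 1) := by
      rw [← pow_mul, mul_comm, pow_mul]
      norm_num [Complex.I_sq]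
    have hzero : (x - (-Complex.I) ^ (w + 1)) * (x + (-Complex.I) ^ (w + 1)) = 0 := by
      have : x ^ 2 - ((-Complex.I) ^ (w + 1)) ^ 2 = 0 := by rw [hx2, hy2]; ring
      linear_combination this
    rcases mul_eq_zero.mp hzero with h | h
    · left; linear_combination h
    · right; linear_combination h
end

section
/- Suppose U = cos(θ/2)·αδσ + i sin(θ/2)·d_k s_k · αδσ, where P = αδσ is the decomposition of a Pauli string into the stabilizer basis and d_k, s_k are a destabilizer/stabilizer generator pair. Then on the coefficient vector |ν⟩, U acts as the Pauli string X_{d̂}Z_{ŝ} (for the boolean vectors of δ, σ) followed by the single-qubit rotation cos(θ/2)I + i sin(θ/2)X on qubit k; in particular U does not increase the bond dimension of the MPS encoding |ν⟩. -/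
open Matrix BigOperators Finset

/-- A single-qubit operator `L` acting on site `k` of the n-qubit register. -/
noncomputable def oneQubit (n : ℕ) (k : Fin n) (L : Matrix Bool Bool ℂ) :
    Matrix (Fin n → Bool) (Fin n → Bool) ℂ :=
  Matrix.of fun v w => if ∀ j, j ≠ k → v j = w j then L (v k) (w k) else 0

/-- The single-qubit operator `X·Z` (the ν-action of `d_k s_k` on one site). -/
noncomputable def XZ1 : Matrix Bool Bool ℂ :=
  Matrix.of fun v w => if v = !w then (if w then -1 else 1) else 0

/-- `ν` has bond rank at most `χ` across the bipartition `A | Aᶜ` of the qubits. -/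
def CutRankLE (n : ℕ) (ν : (Fin n → Bool) → ℂ) (A : Finset (Fin n)) (χ : ℕ) : Prop :=
  ∃ f g : Fin χ → (Fin n → Bool) → ℂ,
    (∀ j x y, (∀ t ∈ A, x t = y t) → f j x = f j y) ∧
    (∀ j x y, (∀ t ∉ A, x t = y t) → g j x = g j y) ∧
    ν = fun x => ∑ j, f j x * g j x

lemma bxor_bxor {n : ℕ} (x a : Fin n → Bool) : bxor (bxor x a) a = x := by
  funext t; simp [bxor, Bool.xor_assoc]

lemma oneQubit_add (n : ℕ) (k : Fin n) (A B : Matrix Bool Bool ℂ) :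
    oneQubit n k (A + B) = oneQubit n k A + oneQubit n k B := by
  ext v w
  simp only [oneQubit, Matrix.of_apply, Matrix.add_apply]
  split <;> simp

lemma oneQubit_smul (n : ℕ) (k : Fin n) (c : ℂ) (A : Matrix Bool Bool ℂ) :
    oneQubit n k (c • A) = c • oneQubit n k A := by
  ext v w
  simp only [oneQubit, Matrix.of_apply, Matrix.smul_apply, smul_eq_mul]
  split <;> simp

lemma oneQubit_one (n : ℕ) (k : Fin n) :
    oneQubit n k (1 : Matrix Bool Bool ℂ) = 1 := by
  ext v w
  simp only [oneQubit, Matrix.of_apply, Matrix.one_apply]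
  by_cases h : v = w
  · subst h; simp
  · by_cases hc : ∀ j, j ≠ k → v j = w j
    · have hk : ¬ v k = w k := by
        intro hk
        apply h
        funext j
        by_cases hj : j = k
        · subst hj; exact hk
        · exact hc j hj
      rw [if_pos hc, if_neg hk, if_neg h]
    · rw [if_neg hc, if_neg h]

lemma oneQubit_XZ1 (n : ℕ) (k : Fin n) :
    oneQubit n k XZ1 = XZ n (fun j => decide (j = k)) (fun j => decide (j = k)) := by
  ext v w
  simp only [oneQubit, XZ, XZ1, Matrix.of_apply]
  have hset : (Finset.univ.filter fun t => w t = true ∧ decide (t = k) = true)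
      = if w k = true then {k} else (∅ : Finset (Fin n)) := by
    ext t
    simp only [Finset.mem_filter, Finset.mem_univ, true_and, decide_eq_true_eq]
    by_cases hk : w k = true
    · simp only [hk, if_true, Finset.mem_singleton]
      constructor
      · rintro ⟨_, rfl⟩; rfl
      · rintro rfl; exact ⟨hk, rfl⟩
    · rw [if_neg hk]
      simp only [Finset.notMem_empty, iff_false]
      rintro ⟨ht, rfl⟩; exact hk ht
  have hbip : bip w (fun j => decide (j = k)) = if w k then 1 else 0 := by
    unfold bip
    rw [hset]
    by_cases hk : w k = true <;> simp [hk]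
  have hxor : (v = bxor w fun j => decide (j = k)) ↔
      ((∀ j, j ≠ k → v j = w j) ∧ v k = !w k) := by
    constructor
    · rintro rfl
      constructor
      · intro j hj; simp [bxor, hj]
      · simp [bxor]
    · rintro ⟨h1, h2⟩
      funext j
      by_cases hj : j = k
      · subst hj; simpa [bxor] using h2
      · simpa [bxor, hj] using h1 j hj
  by_cases hc : ∀ j, j ≠ k → v j = w j
  · by_cases h2 : v k = !w k
    · rw [if_pos hc, if_pos h2, if_pos (hxor.mpr ⟨hc, h2⟩), hbip]
      cases hw : w k <;> simp [hw]
    · rw [if_pos hc, if_neg h2, if_neg (fun h => h2 (hxor.mp h).2)]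
  · rw [if_neg hc, if_neg (fun h => hc (hxor.mp h).1)]

lemma XZ_mulVec {n : ℕ} (a b : Fin n → Bool) (ν : (Fin n → Bool) → ℂ)
    (x : Fin n → Bool) :
    (XZ n a b).mulVec ν x = ((-1 : ℂ) ^ bip (bxor x a) b) * ν (bxor x a) := by
  unfold Matrix.mulVec dotProduct XZ
  have key : ∀ w, (Matrix.of fun v w => if v = bxor w a then ((-1 : ℂ) ^ bip w b) else 0) x w
      * ν w = if bxor x a = w then ((-1 : ℂ) ^ bip w b) * ν w else 0 := by
    intro w
    simp only [Matrix.of_apply]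
    have : (x = bxor w a) ↔ (bxor x a = w) := by
      constructor
      · rintro rfl; exact bxor_bxor w a
      · rintro rfl; exact (bxor_bxor x a).symm
    by_cases h : bxor x a = w
    · rw [if_pos (this.mpr h), if_pos h]
    · rw [if_neg (fun hh => h (this.mp hh)), if_neg h, zero_mul]
  rw [Finset.sum_congr rfl (fun w _ => key w), Finset.sum_ite_eq]
  simp

lemma oneQubit_mulVec {n : ℕ} (k : Fin n) (L : Matrix Bool Bool ℂ)
    (ν : (Fin n → Bool) → ℂ) (x : Fin n → Bool) :
    (oneQubit n k L).mulVec ν x = ∑ c : Bool, L (x k) c * ν (Function.update x k c) := by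
  unfold Matrix.mulVec dotProduct
  have step1 : ∀ w : Fin n → Bool, oneQubit n k L x w * ν w
      = ∑ c : Bool, if Function.update x k c = w then L (x k) c * ν w else 0 := by
    intro w
    have key : ∀ c : Bool, (if c = w k then (oneQubit n k L x w * ν w) else 0)
        = if Function.update x k c = w then L (x k) c * ν w else 0 := by
      intro c
      simp only [oneQubit, Matrix.of_apply]
      by_cases h : Function.update x k c = w
      · subst h
        have hcond : ∀ j, j ≠ k → x j = Function.update x k c j :=
          fun j hj => (Function.update_of_ne hj c x).symm
        rw [if_pos (by simp), if_pos hcond, if_pos rfl, Function.update_self]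
      · by_cases hc : c = w k
        · subst hc
          by_cases h2 : ∀ j, j ≠ k → x j = w j
          · exfalso; apply h; funext j
            by_cases hj : j = k
            · subst hj; simp [Function.update_self]
            · rw [Function.update_of_ne hj]; exact h2 j hj
          · simp [h2, h]
        · simp [hc, h]
    calc oneQubit n k L x w * ν w
        = ∑ c : Bool, if c = w k then (oneQubit n k L x w * ν w) else 0 := by
          rw [Finset.sum_ite_eq']; simp
      _ = ∑ c : Bool, if Function.update x k c = w then L (x k) c * ν w else 0 :=
          Finset.sum_congr rfl (fun c _ => key c)
  rw [Finset.sum_congr rfl (fun w _ => step1 w), Finset.sum_comm]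
  refine Finset.sum_congr rfl (fun c _ => ?_)
  rw [Finset.sum_ite_eq]; simp

lemma cutRank_smul {n : ℕ} {ν : (Fin n → Bool) → ℂ} {A : Finset (Fin n)} {χ : ℕ}
    (c : ℂ) (h : CutRankLE n ν A χ) : CutRankLE n (c • ν) A χ := by
  obtain ⟨f, g, hf, hg, hν⟩ := h
  refine ⟨fun j x => c * f j x, g, fun j x y hxy => by dsimp only; rw [hf j x y hxy],
    hg, ?_⟩
  funext x
  simp only [Pi.smul_apply, smul_eq_mul, hν, Finset.mul_sum]
  exact Finset.sum_congr rfl (fun j _ => by ring)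

lemma sign_prod {n : ℕ} (w b : Fin n → Bool) :
    ((-1 : ℂ) ^ bip w b)
      = ∏ t : Fin n, (if w t = true ∧ b t = true then (-1 : ℂ) else 1) := by
  rw [Finset.prod_ite, Finset.prod_const, Finset.prod_const_one, mul_one]
  rfl

lemma cutRank_XZ {n : ℕ} (a b : Fin n → Bool) {ν : (Fin n → Bool) → ℂ}
    {A : Finset (Fin n)} {χ : ℕ} (h : CutRankLE n ν A χ) :
    CutRankLE n ((XZ n a b).mulVec ν) A χ := by
  obtain ⟨f, g, hf, hg, hν⟩ := h
  refine ⟨fun j x => (∏ t ∈ A, (if (bxor x a) t = true ∧ b t = true then (-1 : ℂ) else 1))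
        * f j (bxor x a),
      fun j x => (∏ t ∈ Aᶜ, (if (bxor x a) t = true ∧ b t = true then (-1 : ℂ) else 1))
        * g j (bxor x a), ?_, ?_, ?_⟩
  · intro j x y hxy
    have hbx : ∀ t ∈ A, bxor x a t = bxor y a t := fun t ht => by
      simp [bxor, hxy t ht]
    dsimp only
    rw [hf j _ _ hbx, Finset.prod_congr rfl (fun t ht => by rw [hbx t ht])]
  · intro j x y hxy
    have hbx : ∀ t ∉ A, bxor x a t = bxor y a t := fun t ht => by
      simp [bxor, hxy t ht]
    dsimp only
    rw [hg j _ _ hbx,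
      Finset.prod_congr rfl (fun t ht => by rw [hbx t (Finset.mem_compl.mp ht)])]
  · funext x
    rw [XZ_mulVec, hν, sign_prod, ← Finset.prod_mul_prod_compl A]
    rw [Finset.mul_sum]
    exact Finset.sum_congr rfl (fun j _ => by ring)

lemma cutRank_oneQubit {n : ℕ} (k : Fin n) (L : Matrix Bool Bool ℂ)
    {ν : (Fin n → Bool) → ℂ} {A : Finset (Fin n)} {χ : ℕ} (h : CutRankLE n ν A χ) :
    CutRankLE n ((oneQubit n k L).mulVec ν) A χ := by
  obtain ⟨f, g, hf, hg, hν⟩ := h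
  by_cases hk : k ∈ A
  · refine ⟨fun j x => ∑ c : Bool, L (x k) c * f j (Function.update x k c), g, ?_, hg, ?_⟩
    · intro j x y hxy
      refine Finset.sum_congr rfl (fun c _ => ?_)
      rw [hxy k hk, hf j (Function.update x k c) (Function.update y k c)
        (fun t ht => by
          by_cases hjk : t = k
          · subst hjk; simp
          · rw [Function.update_of_ne hjk, Function.update_of_ne hjk]; exact hxy t ht)]
    · funext x
      rw [oneQubit_mulVec, hν]
      have hgu : ∀ j (c : Bool), g j (Function.update x k c) = g j x := by
        intro j c
        refine hg j _ x (fun t ht => ?_)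
        have htk : t ≠ k := fun hh => ht (by rw [hh]; exact hk)
        exact Function.update_of_ne htk c x
      simp only [hgu]
      calc ∑ c : Bool, L (x k) c * ∑ j, f j (Function.update x k c) * g j x
          = ∑ c : Bool, ∑ j, L (x k) c * (f j (Function.update x k c) * g j x) :=
            Finset.sum_congr rfl fun c _ => Finset.mul_sum _ _ _
        _ = ∑ j, ∑ c : Bool, L (x k) c * (f j (Function.update x k c) * g j x) :=
            Finset.sum_comm
        _ = ∑ j, (∑ c : Bool, L (x k) c * f j (Function.update x k c)) * g j x := by
            refine Finset.sum_congr rfl fun j _ => ?_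
            rw [Finset.sum_mul]
            exact Finset.sum_congr rfl fun c _ => by ring
  · refine ⟨f, fun j x => ∑ c : Bool, L (x k) c * g j (Function.update x k c), hf, ?_, ?_⟩
    · intro j x y hxy
      refine Finset.sum_congr rfl (fun c _ => ?_)
      rw [hxy k hk, hg j (Function.update x k c) (Function.update y k c)
        (fun t ht => by
          by_cases hjk : t = k
          · subst hjk; simp
          · rw [Function.update_of_ne hjk, Function.update_of_ne hjk]; exact hxy t ht)]
    · funext x
      rw [oneQubit_mulVec, hν]
      have hfu : ∀ j (c : Bool), f j (Function.update x k c) = f j x := by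
        intro j c
        refine hf j _ x (fun t ht => ?_)
        have htk : t ≠ k := fun hh => hk (by rw [← hh]; exact ht)
        exact Function.update_of_ne htk c x
      simp only [hfu]
      calc ∑ c : Bool, L (x k) c * ∑ j, f j x * g j (Function.update x k c)
          = ∑ c : Bool, ∑ j, L (x k) c * (f j x * g j (Function.update x k c)) :=
            Finset.sum_congr rfl fun c _ => Finset.mul_sum _ _ _
        _ = ∑ j, ∑ c : Bool, L (x k) c * (f j x * g j (Function.update x k c)) :=
            Finset.sum_comm
        _ = ∑ j, f j x * ∑ c : Bool, L (x k) c * g j (Function.update x k c) := by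
            refine Finset.sum_congr rfl fun j _ => ?_
            rw [Finset.mul_sum]
            exact Finset.sum_congr rfl fun c _ => by ring

/-- on the coefficient vector `|ν⟩` the free operation
`U = cos(θ/2)·αδσ + i sin(θ/2)·d_k s_k·αδσ` acts as the Pauli string `X_{d̂}Z_{ŝ}`
(times α) followed by a single-qubit rotation on qubit `k`
(namely `cos(θ/2) I + i sin(θ/2) (XZ)_k`, the ν-action of `d_k s_k` being `X_k Z_k`);
in particular it does not increase the bond dimension across any bipartition. -/
theorem free_operation_is_local_rotation_on_coefficients
    (n : ℕ) (dh sh : Fin n → Bool) (α : ℂ) (hα : ‖α‖ = 1)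
    (k : Fin n) (θ : ℝ) :
    ((Real.cos (θ / 2) : ℂ) • (α • XZ n dh sh)
        + (Complex.I * (Real.sin (θ / 2) : ℂ)) •
            (XZ n (fun j => decide (j = k)) (fun j => decide (j = k)) * (α • XZ n dh sh))
      = oneQubit n k
          ((Real.cos (θ / 2) : ℂ) • (1 : Matrix Bool Bool ℂ)
            + (Complex.I * (Real.sin (θ / 2) : ℂ)) • XZ1)
          * (α • XZ n dh sh)) ∧
    ∀ (A : Finset (Fin n)) (χ : ℕ) (ν : (Fin n → Bool) → ℂ),
      CutRankLE n ν A χ →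
      CutRankLE n
        (((Real.cos (θ / 2) : ℂ) • (α • XZ n dh sh)
            + (Complex.I * (Real.sin (θ / 2) : ℂ)) •
                (XZ n (fun j => decide (j = k)) (fun j => decide (j = k)) *
                  (α • XZ n dh sh))).mulVec ν)
        A χ := by
  have hmat : ((Real.cos (θ / 2) : ℂ) • (α • XZ n dh sh)
        + (Complex.I * (Real.sin (θ / 2) : ℂ)) •
            (XZ n (fun j => decide (j = k)) (fun j => decide (j = k)) * (α • XZ n dh sh))
      = oneQubit n k
          ((Real.cos (θ / 2) : ℂ) • (1 : Matrix Bool Bool ℂ)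
            + (Complex.I * (Real.sin (θ / 2) : ℂ)) • XZ1)
          * (α • XZ n dh sh)) := by
    rw [oneQubit_add, oneQubit_smul, oneQubit_smul, oneQubit_one, oneQubit_XZ1,
      add_mul, smul_mul_assoc, smul_mul_assoc, one_mul]
  refine ⟨hmat, fun A χ ν hν => ?_⟩
  rw [hmat, ← Matrix.mulVec_mulVec, Matrix.smul_mulVec]
  exact cutRank_oneQubit k _ (cutRank_smul α (cutRank_XZ dh sh hν))
end
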